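/- arXiv:2212.08428 — 3 statements merged into one kernel-verified Lean document; each statement's English description precedes it below -/
import Mathlib

section
/- Let (R, m) be a Noetherian local ring, M a finitely generated R-module, and I an ideal of R containing an M-regular element. Then for every integer m ≥ 0, the colon submodule of the Ratliff-Rush closure of I^{m+1} with respect to M by I equals the Ratliff-Rush closure of I^m with respect to M; that is, (Ĩ^{m+1}_M :_M I) = Ĩ^m_M. -/
/- Preamble: self-contained definitions for reduction numbers, Ratliff-Rush closures,
Castelnuovo-Mumford regularity of blowup modules (via the graded Čech/Koszul-colimit
description of local cohomology with respect to the irrelevant ideal), Hilbert-Samuel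
functions/polynomials, postulation numbers, depth, Cohen-Macaulayness, Buchsbaum rings,
Ulrich ideals, Gorenstein rings, and integral closure of ideals. -/

open Classical

noncomputable section RRPaper

variable {R : Type*} [CommRing R]

/-- The colon submodule `(N :_M J) = { x ∈ M | J • x ⊆ N }`. -/
def mcolon {M : Type*} [AddCommGroup M] [Module R M] (N : Submodule R M) (J : Ideal R) :
    Submodule R M where
  carrier := {x | ∀ a ∈ J, a • x ∈ N}
  add_mem' := by
    intro x y hx hy a ha
    rw [smul_add]; exact N.add_mem (hx a ha) (hy a ha)
  zero_mem' := by intro a ha; rw [smul_zero]; exact N.zero_mem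
  smul_mem' := by
    intro c x hx a ha
    show a • c • x ∈ N
    rw [smul_smul, mul_comm, ← smul_smul]
    exact N.smul_mem c (hx a ha)

/-- The graded piece `I^n M` of the Rees module, for an integer `n` (zero in negative
degrees). -/
def ipow (I : Ideal R) (M : Type*) [AddCommGroup M] [Module R M] (n : ℤ) : Submodule R M :=
  if 0 ≤ n then (I ^ n.toNat) • ⊤ else ⊥

/-- The Ratliff-Rush closure of `I^m` with respect to `M`:
`⋃_{n ≥ 1} (I^{m+n} M :_M I^n)`.  (The union is increasing, hence equals the `iSup`.) -/
def rrc (I : Ideal R) (M : Type*) [AddCommGroup M] [Module R M] (m : ℕ) : Submodule R M :=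
  ⨆ n : ℕ, mcolon ((I ^ (m + n + 1)) • (⊤ : Submodule R M)) (I ^ (n + 1))

/-- `x` is an `M`-superficial element of `I`. -/
def IsSuperficial (I : Ideal R) (M : Type*) [AddCommGroup M] [Module R M] (x : R) : Prop :=
  x ∈ I ∧ ∃ c : ℕ, ∀ n ≥ c,
    mcolon ((I ^ (n + 1)) • (⊤ : Submodule R M)) (Ideal.span {x}) ⊓ ((I ^ c) • ⊤)
      = (I ^ n) • (⊤ : Submodule R M)

/-- `J` is a reduction of `I` relative to `M`: `J ⊆ I` and `J I^n M = I^{n+1} M` for some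
`n ≥ 0`. -/
def IsReduction (J I : Ideal R) (M : Type*) [AddCommGroup M] [Module R M] : Prop :=
  J ≤ I ∧ ∃ n : ℕ, J • ((I ^ n) • (⊤ : Submodule R M)) = (I ^ (n + 1)) • ⊤

/-- The reduction number `r_J(I, M) = min { m | J I^m M = I^{m+1} M }`. -/
def redNum (J I : Ideal R) (M : Type*) [AddCommGroup M] [Module R M] : ℕ :=
  sInf {m : ℕ | J • ((I ^ m) • (⊤ : Submodule R M)) = (I ^ (m + 1)) • ⊤}

/-- `J` is a minimal reduction of `I` relative to `M`. -/
def IsMinReduction (J I : Ideal R) (M : Type*) [AddCommGroup M] [Module R M] : Prop :=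
  IsReduction J I M ∧ ∀ K : Ideal R, IsReduction K I M → K ≤ J → K = J

/-- The reduction number `r(I, M)`: minimum of `r_J(I, M)` over minimal reductions `J`. -/
def redNumAbs (I : Ideal R) (M : Type*) [AddCommGroup M] [Module R M] : ℕ :=
  sInf {r : ℕ | ∃ J : Ideal R, IsMinReduction J I M ∧ redNum J I M = r}

/-- `s*(I, M) = min { n ≥ 1 | Ĩ^i_M = I^i M for all i ≥ n }`. -/
def sStar (I : Ideal R) (M : Type*) [AddCommGroup M] [Module R M] : ℕ :=
  sInf {n : ℕ | 1 ≤ n ∧ ∀ i ≥ n, rrc I M i = (I ^ i) • (⊤ : Submodule R M)}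

section Cech

variable {M : Type*} [AddCommGroup M] [Module R M]

/-- The Koszul-Čech codifferential at stage `t` for the family `a : Fin r → R`:
`(d x) T = ∑_{i ∈ T} (-1)^{#{j ∈ T | j < i}} a_i^t • x (T \ {i})`. -/
def cechD {r : ℕ} (a : Fin r → R) (t : ℕ) :
    (Finset (Fin r) → M) →ₗ[R] (Finset (Fin r) → M) where
  toFun x := fun T =>
    ∑ i ∈ T, (((-1 : R) ^ (T.filter fun j => j < i).card * a i ^ t)) • x (T.erase i)
  map_add' x y := by
    funext T
    simp [smul_add, Finset.sum_add_distrib]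
  map_smul' c x := by
    funext T
    simp only [Pi.smul_apply, RingHom.id_apply, Finset.smul_sum]
    refine Finset.sum_congr rfl fun i _ => ?_
    rw [smul_smul, mul_comm, ← smul_smul]

/-- The transition map from Koszul stage `t` to stage `t + s`: componentwise
multiplication by `(∏_{i ∈ T} a_i)^s`. -/
def cechT {r : ℕ} (a : Fin r → R) (s : ℕ) :
    (Finset (Fin r) → M) →ₗ[R] (Finset (Fin r) → M) where
  toFun x := fun T => ((∏ i ∈ T, a i) ^ s) • x T
  map_add' x y := by funext T; simp [smul_add]
  map_smul' c x := by
    funext T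
    simp only [Pi.smul_apply, RingHom.id_apply]
    rw [smul_smul, mul_comm, ← smul_smul]

/-- `x` is a degree-`n` cochain in homological degree `j` at Koszul stage `t`, for the
grading given by `fil`. -/
def cechChainMem (fil : ℤ → Submodule R M) {r : ℕ} (j t : ℕ) (n : ℤ)
    (x : Finset (Fin r) → M) : Prop :=
  ∀ T : Finset (Fin r),
    (T.card = j → x T ∈ fil (n + (t : ℤ) * (j : ℤ))) ∧ (T.card ≠ j → x T = 0)

/-- `z` is a coboundary (modulo the submodules `sub`) in degree `n`, homological degree
`j`, at Koszul stage `t`. -/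
def cechCobound (fil sub : ℤ → Submodule R M) {r : ℕ} (a : Fin r → R) (j t : ℕ) (n : ℤ)
    (z : Finset (Fin r) → M) : Prop :=
  ∃ y : Finset (Fin r) → M, cechChainMem fil (j - 1) t n y ∧ (j = 0 → y = 0) ∧
    ∀ T : Finset (Fin r), T.card = j →
      z T - cechD a t y T ∈ sub (n + (t : ℤ) * (j : ℤ))

/-- Nonvanishing of the degree-`n` graded piece of the `j`-th local cohomology (with
respect to the irrelevant ideal) of the graded module whose `n`-th piece is
`fil n / sub n` (computed via the colimit over `t` of Koszul cohomologies of the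
families `a^t`): there is a stage-`t` cocycle whose image at every later stage is not a
coboundary. -/
def lcDegNonzero (fil sub : ℤ → Submodule R M) {r : ℕ} (a : Fin r → R) (j : ℕ) (n : ℤ) :
    Prop :=
  ∃ (t : ℕ) (x : Finset (Fin r) → M), cechChainMem fil j t n x ∧
    (∀ T : Finset (Fin r), T.card = j + 1 →
      cechD a t x T ∈ sub (n + (t : ℤ) * ((j : ℤ) + 1))) ∧
    ∀ s : ℕ, ¬ cechCobound fil sub a j (t + s) n (cechT a s x)

/-- The Castelnuovo-Mumford regularity `max_j { a_j + j }` of the graded module with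
pieces `fil n / sub n`, computed with respect to the degree-one "multiplication"
elements `a : Fin r → R`. -/
def cmReg (fil sub : ℤ → Submodule R M) {r : ℕ} (a : Fin r → R) : ℤ :=
  sSup {m : ℤ | ∃ (j : ℕ) (n : ℤ), lcDegNonzero fil sub a j n ∧ m = n + j}

end Cech

/-- The Castelnuovo-Mumford regularity of the Rees module `R(I, M) = ⊕_{n ≥ 0} I^n M`,
computed via a generating family `a` of `I` (whose degree-one elements `a_i t` generate
the irrelevant ideal of the Rees algebra). -/
def regRees (I : Ideal R) (M : Type*) [AddCommGroup M] [Module R M] {r : ℕ}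
    (a : Fin r → R) : ℤ :=
  cmReg (fun n => ipow I M n) (fun _ => ⊥) a

/-- The Castelnuovo-Mumford regularity of the associated graded module
`G(I, M) = ⊕_{n ≥ 0} I^n M / I^{n+1} M`, computed via a generating family `a` of `I`. -/
def regGr (I : Ideal R) (M : Type*) [AddCommGroup M] [Module R M] {r : ℕ}
    (a : Fin r → R) : ℤ :=
  cmReg (fun n => ipow I M n) (fun n => ipow I M (n + 1)) a

/-- Length of a module, as the Krull dimension of its submodule lattice (junk value `0`
for infinite length, extracted as a natural number). -/
def lenNat (R M : Type*) [CommRing R] [AddCommGroup M] [Module R M] : ℕ :=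
  (WithBot.unbotD 0 (Order.krullDim (Submodule R M))).toNat

/-- The Hilbert-Samuel function `H_I(n) = λ(R/I^n)` for `n ≥ 1`, and `0` for `n ≤ 0`. -/
def hilbF (I : Ideal R) (n : ℤ) : ℚ :=
  if 1 ≤ n then (lenNat R (R ⧸ I ^ n.toNat) : ℚ) else 0

/-- The Hilbert-Samuel polynomial of `I`: the polynomial agreeing with `H_I(n)` for all
`n ≫ 0` (junk value `0` if it does not exist). -/
def hsPoly (I : Ideal R) : Polynomial ℚ :=
  if h : ∃ P : Polynomial ℚ, ∃ N : ℤ, ∀ n : ℤ, N ≤ n → P.eval (n : ℚ) = hilbF I n then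
    h.choose
  else 0

/-- The postulation number `ρ(I) = sup { n ∈ ℤ | H_I(n) ≠ P_I(n) }`. -/
def postulation (I : Ideal R) : ℤ :=
  sSup {n : ℤ | hilbF I n ≠ (hsPoly I).eval (n : ℚ)}

/-- The multiplicity `e_0(I)` of an `m`-primary ideal in a `d`-dimensional local ring:
`d!` times the degree-`d` coefficient of the Hilbert-Samuel polynomial. -/
def multNum (I : Ideal R) (d : ℕ) : ℚ :=
  (hsPoly I).coeff d * (Nat.factorial d : ℚ)

/-- `f` is an `M`-regular sequence: each `f i` is a non-zero-divisor modulo the previous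
ones, and `(f) M ≠ M`. -/
def IsRegSeqOn {k : ℕ} (f : Fin k → R) (M : Type*) [AddCommGroup M] [Module R M] : Prop :=
  (Ideal.span (Set.range f)) • (⊤ : Submodule R M) ≠ ⊤ ∧
  ∀ i : Fin k, ∀ m : M,
    f i • m ∈ (Ideal.span (f '' {j | j < i})) • (⊤ : Submodule R M) →
      m ∈ (Ideal.span (f '' {j | j < i})) • (⊤ : Submodule R M)

/-- The depth of `M` over a local ring `R`: the maximal length of an `M`-regular
sequence contained in the maximal ideal. -/
def mdepth (R M : Type*) [CommRing R] [IsLocalRing R] [AddCommGroup M] [Module R M] : ℕ :=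
  sSup {k : ℕ | ∃ f : Fin k → R,
    (∀ i, f i ∈ IsLocalRing.maximalIdeal R) ∧ IsRegSeqOn f M}

/-- The dimension of a module: the Krull dimension of `R / ann M`. -/
def mdim (R M : Type*) [CommRing R] [AddCommGroup M] [Module R M] : WithBot (WithTop ℕ) :=
  ringKrullDim (R ⧸ Module.annihilator R M)

/-- `M` is a Cohen-Macaulay `R`-module of dimension `s`. -/
def IsCMMod (R M : Type*) [CommRing R] [IsLocalRing R] [AddCommGroup M] [Module R M]
    (s : ℕ) : Prop :=
  mdim R M = (s : ℕ) ∧ mdepth R M = s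

/-- A parameter ideal of a `d`-dimensional local ring: generated by `d` elements and
primary to the maximal ideal. -/
def IsParamIdeal [IsLocalRing R] (d : ℕ) (Q : Ideal R) : Prop :=
  (∃ f : Fin d → R, Q = Ideal.span (Set.range f)) ∧
    Q.radical = IsLocalRing.maximalIdeal R

/-- `R` is a Buchsbaum local ring of dimension `d`: the difference
`λ(R/Q) - e_0(Q)` is the same for every parameter ideal `Q`. -/
def IsBuchsbaum (R : Type*) [CommRing R] [IsLocalRing R] (d : ℕ) : Prop :=
  ∃ c : ℚ, ∀ Q : Ideal R, IsParamIdeal d Q → (lenNat R (R ⧸ Q) : ℚ) - multNum Q d = c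

/-- An Ulrich ideal of a `d`-dimensional Cohen-Macaulay local ring: `m`-primary,
containing a parameter ideal `J` as a reduction with `r_J(I) ≤ 1`, and with `I/I²` free
over `R/I`. -/
def IsUlrich [IsLocalRing R] (d : ℕ) (I : Ideal R) : Prop :=
  I.radical = IsLocalRing.maximalIdeal R ∧
  (∃ J : Ideal R, IsParamIdeal d J ∧ IsReduction J I R ∧ redNum J I R ≤ 1) ∧
  Module.Free (R ⧸ I) I.Cotangent

/-- `R` is a Gorenstein local ring of dimension `d`: it admits a regular sequence of
length `d` in the maximal ideal (so it is Cohen-Macaulay) such that the socle of the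
quotient is one-dimensional. -/
def IsGorenstein (R : Type*) [CommRing R] [IsLocalRing R] (d : ℕ) : Prop :=
  ringKrullDim R = d ∧ ∃ f : Fin d → R,
    (∀ i, f i ∈ IsLocalRing.maximalIdeal R) ∧ IsRegSeqOn f R ∧
    lenNat R (mcolon (⊥ : Submodule R (R ⧸ Ideal.span (Set.range f)))
      (IsLocalRing.maximalIdeal R)) = 1

/-- The minimal number of generators of an ideal. -/
def numGen (I : Ideal R) : ℕ :=
  sInf {k : ℕ | ∃ f : Fin k → R, Ideal.span (Set.range f) = I}

/-- `x` lies in the integral closure of the ideal `I`: it satisfies an equation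
`x^m + a_1 x^{m-1} + ⋯ + a_m = 0` with `a_i ∈ I^i`. -/
def memIntClosure (I : Ideal R) (x : R) : Prop :=
  ∃ m : ℕ, 0 < m ∧ ∃ a : ℕ → R, (∀ i, 1 ≤ i → i ≤ m → a i ∈ I ^ i) ∧
    x ^ m + ∑ i ∈ Finset.Icc 1 m, a i * x ^ (m - i) = 0

/-- `I` is integrally closed. -/
def IsIntClosed (I : Ideal R) : Prop := ∀ x : R, memIntClosure I x → x ∈ I

/-- `I` is a normal ideal: all powers `I^j`, `j ≥ 1`, are integrally closed. -/
def IsNormalIdeal (I : Ideal R) : Prop := ∀ j : ℕ, 1 ≤ j → IsIntClosed (I ^ j)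

/-- The ideal of positive-degree elements of the Rees algebra `R[It] ⊆ R[t]`. -/
def reesPos (I : Ideal R) : Ideal (reesAlgebra I) :=
  RingHom.ker ((Polynomial.evalRingHom (0 : R)).comp (Subalgebra.val (reesAlgebra I)).toRingHom)

/-- The associated graded ring `G(I) = R(I)/I·R(I)`. -/
def agr (I : Ideal R) : Type _ :=
  reesAlgebra I ⧸ (Ideal.map (algebraMap R (reesAlgebra I)) I)

instance (I : Ideal R) : CommRing (agr I) :=
  inferInstanceAs (CommRing (reesAlgebra I ⧸ (Ideal.map (algebraMap R (reesAlgebra I)) I)))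

/-- The irrelevant ideal `G(I)_+` of the associated graded ring. -/
def agrPos (I : Ideal R) : Ideal (agr I) :=
  Ideal.map (Ideal.Quotient.mk (Ideal.map (algebraMap R (reesAlgebra I)) I)) (reesPos I)

end RRPaper

/-!
Since `I` is finitely generated, `_ :_M I` commutes with the increasing union
`Ĩ^{m+1}_M = ⋃ₙ (I^{m+1+n} M :_M I^{n})`, and `(I^{m+1+n} M :_M I^{n}) :_M I` is the stage
`(I^{m+n+1} M :_M I^{n+1})` of the union defining `Ĩ^m_M`.
-/

section ColonSubmodule

variable {R : Type*} [CommRing R] {M : Type*} [AddCommGroup M] [Module R M]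

theorem le_mcolon_iff {P N : Submodule R M} {J : Ideal R} : P ≤ mcolon N J ↔ J • P ≤ N :=
  Submodule.smul_le.trans ⟨fun h x hx a ha => h a ha x hx, fun h a ha x hx => h x hx a ha⟩ |>.symm

theorem mem_mcolon_iff_smul_span_le {N : Submodule R M} {J : Ideal R} {x : M} :
    x ∈ mcolon N J ↔ J • Submodule.span R {x} ≤ N := by
  rw [← le_mcolon_iff, Submodule.span_singleton_le_iff_mem]

theorem mcolon_mono {N N' : Submodule R M} (h : N ≤ N') (J : Ideal R) :
    mcolon N J ≤ mcolon N' J :=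
  le_mcolon_iff.mpr ((le_mcolon_iff.mp le_rfl).trans h)

theorem mcolon_mcolon (N : Submodule R M) (J K : Ideal R) :
    mcolon (mcolon N J) K = mcolon N (J * K) := by
  ext x
  rw [mem_mcolon_iff_smul_span_le, mem_mcolon_iff_smul_span_le, le_mcolon_iff,
    Submodule.mul_smul]

theorem Submodule.FG.exists_le_of_le_iSup_of_directed {ι : Type*} [Nonempty ι]
    {f : ι → Submodule R M} (hf : Directed (· ≤ ·) f) {N : Submodule R M} (hN : N.FG)
    (h : N ≤ ⨆ i, f i) : ∃ i, N ≤ f i := by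
  obtain ⟨-, ⟨i, rfl⟩, hi⟩ :=
    (CompleteLattice.isCompactElement_iff_le_of_directed_sSup_le (k := N)).mp
      ((Submodule.fg_iff_compact N).mp hN) (Set.range f) (Set.range_nonempty f)
      (directedOn_range.mpr hf) (by rwa [sSup_range])
  exact ⟨i, hi⟩

theorem mcolon_iSup_of_directed {ι : Type*} [Nonempty ι] {f : ι → Submodule R M}
    (hf : Directed (· ≤ ·) f) {J : Ideal R} (hJ : J.FG) :
    mcolon (⨆ i, f i) J = ⨆ i, mcolon (f i) J := by
  refine le_antisymm (fun x hx => ?_) (iSup_le fun i => mcolon_mono (le_iSup f i) J)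
  rw [mem_mcolon_iff_smul_span_le] at hx
  obtain ⟨i, hi⟩ :=
    (Submodule.FG.smul hJ (Submodule.fg_span_singleton x)).exists_le_of_le_iSup_of_directed hf hx
  exact Submodule.mem_iSup_of_mem i (mem_mcolon_iff_smul_span_le.mpr hi)

end ColonSubmodule

section RatliffRush

variable {R : Type*} [CommRing R] (I : Ideal R) (M : Type*) [AddCommGroup M] [Module R M]

/-- `rrc I M m` is by definition `⨆ n, rrStage I M m n`. -/
def rrStage (m n : ℕ) : Submodule R M :=
  mcolon ((I ^ (m + n + 1)) • (⊤ : Submodule R M)) (I ^ (n + 1))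

theorem rrStage_monotone (m : ℕ) : Monotone (rrStage I M m) := by
  refine monotone_nat_of_le_succ fun n => le_mcolon_iff.mpr ?_
  rw [pow_succ' I (n + 1), Submodule.mul_smul, show m + (n + 1) + 1 = (m + n + 1) + 1 by ring,
    pow_succ' I (m + n + 1), Submodule.mul_smul]
  exact Submodule.smul_mono le_rfl (le_mcolon_iff.mp le_rfl)

theorem mcolon_rrStage_succ (m n : ℕ) :
    mcolon (rrStage I M (m + 1) n) I = rrStage I M m (n + 1) := by
  rw [rrStage, rrStage, mcolon_mcolon, ← pow_succ, show m + 1 + n + 1 = m + (n + 1) + 1 by ring]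

end RatliffRush

theorem rr_colon_ideal_general {R : Type*} [CommRing R] [IsNoetherianRing R]
    {M : Type*} [AddCommGroup M] [Module R M]
    (I : Ideal R) :
    ∀ m : ℕ, mcolon (rrc I M (m + 1)) I = rrc I M m := by
  intro m
  calc mcolon (rrc I M (m + 1)) I
      = ⨆ n, mcolon (rrStage I M (m + 1) n) I :=
        mcolon_iSup_of_directed (rrStage_monotone I M (m + 1)).directed_le
          (IsNoetherian.noetherian I)
    _ = ⨆ n, rrStage I M m (n + 1) := by simp only [mcolon_rrStage_succ]
    _ = rrc I M m := (rrStage_monotone I M m).iSup_nat_add 1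

/-- colon of Ratliff-Rush closures (Proposition: (Ĩ^{m+1}_M :_M I) = Ĩ^m_M). -/
theorem rr_colon_ideal {R : Type*} [CommRing R] [IsNoetherianRing R] [IsLocalRing R]
    {M : Type*} [AddCommGroup M] [Module R M] [Module.Finite R M]
    (I : Ideal R) (hreg : ∃ a ∈ I, ∀ x : M, a • x = 0 → x = 0) :
    ∀ m : ℕ, mcolon (rrc I M (m + 1)) I = rrc I M m :=
  rr_colon_ideal_general I
end

section
/- Let (R, m) be a Noetherian local ring, M a finitely generated R-module, and I an ideal of R containing an M-regular element. Then for every integer m ≥ 0 and every M-superficial element x of I, one has (Ĩ^{m+1}_M :_M x) = Ĩ^m_M. -/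
/- Preamble: self-contained definitions for reduction numbers, Ratliff-Rush closures,
Castelnuovo-Mumford regularity of blowup modules (via the graded Čech/Koszul-colimit
description of local cohomology with respect to the irrelevant ideal), Hilbert-Samuel
functions/polynomials, postulation numbers, depth, Cohen-Macaulayness, Buchsbaum rings,
Ulrich ideals, Gorenstein rings, and integral closure of ideals. -/

open Classical

/-! If `x • y ∈ Ĩ^{m+1}_M`, then `I^{n+1} x y ⊆ I^{m+n+2} M` for all large `n`. Taking `n` beyond
the superficiality constant `c`, each `a • y` with `a ∈ I^{n+1}` lies in
`(I^{m+n+2} M :_M x) ∩ I^c M = I^{m+n+1} M`, so `y ∈ Ĩ^m_M`. The reverse inclusion only needs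
`x ∈ I`. -/

section RatliffRush

variable {R M : Type*} [CommRing R] [AddCommGroup M] [Module R M]

theorem mem_mcolon_span_singleton {N : Submodule R M} {x : R} {y : M} :
    y ∈ mcolon N (Ideal.span {x}) ↔ x • y ∈ N := by
  refine ⟨fun h => h x (Ideal.mem_span_singleton_self x), fun h a ha => ?_⟩
  obtain ⟨r, rfl⟩ := Ideal.mem_span_singleton'.mp ha
  rw [mul_smul]
  exact N.smul_mem r h

theorem mcolon_le_mcolon_smul_mul (I J : Ideal R) (N : Submodule R M) :
    mcolon N J ≤ mcolon (I • N) (J * I) := by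
  intro y hy a ha
  refine Submodule.mul_induction_on ha (fun b hb c hc => ?_) (fun u v hu hv => ?_)
  · rw [mul_comm, mul_smul]
    exact Submodule.smul_mem_smul hc (hy b hb)
  · rw [add_smul]
    exact Submodule.add_mem _ hu hv

theorem monotone_mcolon_pow (I : Ideal R) (m : ℕ) :
    Monotone fun n : ℕ => mcolon ((I ^ (m + n + 1)) • (⊤ : Submodule R M)) (I ^ (n + 1)) := by
  refine monotone_nat_of_le_succ fun n => ?_
  have h := mcolon_le_mcolon_smul_mul I (I ^ (n + 1)) ((I ^ (m + n + 1)) • (⊤ : Submodule R M))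
  rwa [← Submodule.smul_assoc, Ideal.smul_eq_mul, ← pow_succ', ← pow_succ,
    show m + n + 1 + 1 = m + (n + 1) + 1 by omega] at h

theorem mem_rrc_iff {I : Ideal R} {m : ℕ} {y : M} :
    y ∈ rrc I M m ↔
      ∃ n, y ∈ mcolon ((I ^ (m + n + 1)) • (⊤ : Submodule R M)) (I ^ (n + 1)) :=
  Submodule.mem_iSup_of_directed _ (monotone_mcolon_pow I m).directed_le

theorem mem_rrc_iff_eventually {I : Ideal R} {m : ℕ} {y : M} :
    y ∈ rrc I M m ↔
      ∀ᶠ n in Filter.atTop, y ∈ mcolon ((I ^ (m + n + 1)) • (⊤ : Submodule R M)) (I ^ (n + 1)) := by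
  rw [mem_rrc_iff, Filter.eventually_atTop]
  exact ⟨fun ⟨n, hn⟩ => ⟨n, fun k hk => monotone_mcolon_pow I m hk hn⟩,
    fun ⟨n, hn⟩ => ⟨n, hn n le_rfl⟩⟩

theorem smul_mem_rrc_succ {I : Ideal R} {m : ℕ} {x : R} {y : M} (hx : x ∈ I)
    (hy : y ∈ rrc I M m) : x • y ∈ rrc I M (m + 1) := by
  obtain ⟨n, hn⟩ := mem_rrc_iff.mp hy
  refine mem_rrc_iff.mpr ⟨n, fun a ha => ?_⟩
  have h := Submodule.smul_mem_smul hx (hn a ha)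
  rw [← Submodule.smul_assoc, Ideal.smul_eq_mul, ← pow_succ'] at h
  rw [smul_comm, show m + 1 + n + 1 = m + n + 1 + 1 by omega]
  exact h

theorem IsSuperficial.mem_rrc_of_smul_mem_rrc_succ {I : Ideal R} {x : R}
    (hx : IsSuperficial I M x) {m : ℕ} {y : M} (hxy : x • y ∈ rrc I M (m + 1)) :
    y ∈ rrc I M m := by
  obtain ⟨-, c, hc⟩ := hx
  obtain ⟨n, hn, hn_ge⟩ :=
    ((mem_rrc_iff_eventually.mp hxy).and (Filter.eventually_ge_atTop c)).exists
  refine mem_rrc_iff.mpr ⟨n, fun a ha => ?_⟩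
  rw [← hc (m + n + 1) (by omega)]
  refine ⟨mem_mcolon_span_singleton.mpr ?_, ?_⟩
  · rw [smul_comm, show m + n + 1 + 1 = m + 1 + n + 1 by omega]
    exact hn a ha
  · exact Submodule.smul_mem_smul (Ideal.pow_le_pow_right (by omega) ha) Submodule.mem_top

end RatliffRush

theorem rr_colon_superficial_general {R : Type*} [CommRing R]
    {M : Type*} [AddCommGroup M] [Module R M]
    (I : Ideal R) :
    ∀ m : ℕ, ∀ x : R, IsSuperficial I M x →
      mcolon (rrc I M (m + 1)) (Ideal.span {x}) = rrc I M m := by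
  intro m x hx
  ext y
  rw [mem_mcolon_span_singleton]
  exact ⟨hx.mem_rrc_of_smul_mem_rrc_succ, smul_mem_rrc_succ hx.1⟩

/-- colon of Ratliff-Rush closures by a superficial element. -/
theorem rr_colon_superficial {R : Type*} [CommRing R] [IsNoetherianRing R] [IsLocalRing R]
    {M : Type*} [AddCommGroup M] [Module R M] [Module.Finite R M]
    (I : Ideal R) (hreg : ∃ a ∈ I, ∀ x : M, a • x = 0 → x = 0) :
    ∀ m : ℕ, ∀ x : R, IsSuperficial I M x →
      mcolon (rrc I M (m + 1)) (Ideal.span {x}) = rrc I M m :=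
  rr_colon_superficial_general I
end

section
/- Let (R, m) be a Noetherian local ring, M a nonzero finitely generated R-module, and I an ideal of R containing an M-regular element. Then s*(I, M) = min{ m ≥ 1 | I^{n+1}M :_M I = I^nM for all n ≥ m }. -/
/- Preamble: self-contained definitions for reduction numbers, Ratliff-Rush closures,
Castelnuovo-Mumford regularity of blowup modules (via the graded Čech/Koszul-colimit
description of local cohomology with respect to the irrelevant ideal), Hilbert-Samuel
functions/polynomials, postulation numbers, depth, Cohen-Macaulayness, Buchsbaum rings,
Ulrich ideals, Gorenstein rings, and integral closure of ideals. -/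

open Classical

/- If the one-step colons `I^{n+1}M :_M I` equal `I^nM` from `m` on, then peeling off one factor
of `I` at a time, `I^{i+j+1}M :_M I^{j+1} ⊆ (I^{i+j+1}M :_M I) :_M I^j = I^{i+j}M :_M I^j`, shows that
every colon in the union defining `Ĩ^i_M` is `I^iM` for `i ≥ m`. Conversely
`I^iM ⊆ I^{i+1}M :_M I ⊆ Ĩ^i_M`, so `Ĩ^i_M = I^iM` forces the one-step colon to be `I^iM`. -/

section RatliffRush

variable {R : Type*} [CommRing R] {M : Type*} [AddCommGroup M] [Module R M]

lemma mcolon_mul_le (N : Submodule R M) (J K : Ideal R) :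
    mcolon N (J * K) ≤ mcolon (mcolon N J) K :=
  fun _ hx b hb a ha => by
    rw [smul_smul]
    exact hx _ (Ideal.mul_mem_mul ha hb)

lemma pow_smul_top_le_mcolon (I : Ideal R) (n : ℕ) :
    (I ^ n) • (⊤ : Submodule R M) ≤ mcolon ((I ^ (n + 1)) • ⊤) I :=
  fun _ hx a ha => by
    rw [pow_succ', mul_smul]
    exact Submodule.smul_mem_smul ha hx

lemma mcolon_le_rrc (I : Ideal R) (i : ℕ) :
    mcolon ((I ^ (i + 1)) • (⊤ : Submodule R M)) I ≤ rrc I M i := by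
  refine le_trans ?_ (le_iSup _ 0)
  simp only [zero_add, pow_one, add_zero, le_refl]

lemma mcolon_pow_le_of_forall_mcolon_eq (I : Ideal R) {m : ℕ}
    (h : ∀ n : ℕ, m ≤ n → mcolon ((I ^ (n + 1)) • (⊤ : Submodule R M)) I = (I ^ n) • ⊤)
    {i : ℕ} (hi : m ≤ i) (j : ℕ) :
    mcolon ((I ^ (i + j + 1)) • (⊤ : Submodule R M)) (I ^ (j + 1)) ≤ (I ^ i) • ⊤ := by
  induction j with
  | zero => rw [add_zero, zero_add, pow_one, h i hi]
  | succ j ih =>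
    calc mcolon ((I ^ (i + (j + 1) + 1)) • ⊤) (I ^ (j + 1 + 1))
        ≤ mcolon (mcolon ((I ^ (i + j + 1 + 1)) • ⊤) I) (I ^ (j + 1)) := by
          rw [pow_succ' I (j + 1), ← add_assoc]
          exact mcolon_mul_le _ _ _
      _ = mcolon ((I ^ (i + j + 1)) • ⊤) (I ^ (j + 1)) := by rw [h (i + j + 1) (by omega)]
      _ ≤ (I ^ i) • ⊤ := ih

lemma forall_rrc_eq_iff_forall_mcolon_eq (I : Ideal R) (m : ℕ) :
    (∀ i ≥ m, rrc I M i = (I ^ i) • (⊤ : Submodule R M)) ↔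
      ∀ n : ℕ, m ≤ n → mcolon ((I ^ (n + 1)) • (⊤ : Submodule R M)) I = (I ^ n) • ⊤ := by
  constructor
  · intro h n hn
    refine le_antisymm ?_ (pow_smul_top_le_mcolon I n)
    rw [← h n hn]
    exact mcolon_le_rrc I n
  · intro h i hi
    refine le_antisymm (iSup_le (mcolon_pow_le_of_forall_mcolon_eq I h hi)) ?_
    exact (pow_smul_top_le_mcolon I i).trans (mcolon_le_rrc I i)

end RatliffRush

theorem sStar_eq_min_colon_general {R : Type*} [CommRing R] {M : Type*} [AddCommGroup M] [Module R M]
    (I : Ideal R) :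
    sStar I M = sInf {m : ℕ | 1 ≤ m ∧ ∀ n : ℕ, m ≤ n →
      mcolon ((I ^ (n + 1)) • (⊤ : Submodule R M)) I = (I ^ n) • (⊤ : Submodule R M)} := by
  unfold sStar
  congr 1
  ext m
  exact and_congr_right' (forall_rrc_eq_iff_forall_mcolon_eq I m)

/-- characterization of `s*(I, M)` via colon submodules. -/
theorem sStar_eq_min_colon {R : Type*} [CommRing R] [IsNoetherianRing R] [IsLocalRing R]
    {M : Type*} [AddCommGroup M] [Module R M] [Module.Finite R M] [Nontrivial M]
    (I : Ideal R) (hreg : ∃ a ∈ I, ∀ x : M, a • x = 0 → x = 0) :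
    sStar I M = sInf {m : ℕ | 1 ≤ m ∧ ∀ n : ℕ, m ≤ n →
      mcolon ((I ^ (n + 1)) • (⊤ : Submodule R M)) I = (I ^ n) • (⊤ : Submodule R M)} :=
  sStar_eq_min_colon_general I
end
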